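/- arXiv:1812.02290 — 4 statements merged into one kernel-verified Lean document; each statement's English description precedes it below -/
import Mathlib

section
/- Let V be a real Hilbert space whose inner product is the bilinear form a, with energy norm ‖·‖_V. Let u solve a(u,v)=f(v) for all v ∈ V, let u_ms ∈ V, let V_i be a closed subspace of V, and let φ ∈ V_i satisfy a(φ,v) = f(v) − a(u_ms,v) for all v ∈ V_i. Set α = a(u − u_ms, φ)/‖φ‖_V² (for φ ≠ 0). Then ‖u − (u_ms + α φ)‖_V² = ‖u − u_ms‖_V² − a(u − u_ms, φ)²/‖φ‖_V², and in particular since a(u − u_ms, φ) = ‖φ‖_V², ‖u − (u_ms + α φ)‖_V² = ‖u − u_ms‖_V² − ‖φ‖_V². -/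
open RealInnerProductSpace

section

variable {V : Type*} [NormedAddCommGroup V] [InnerProductSpace ℝ V]

/-- Pythagoras for the projection of `w` onto the line through `φ`; both sides read `‖w‖ ^ 2`
when `φ = 0`, thanks to `x / 0 = 0`. -/
theorem norm_sub_smul_sq_eq_sub_inner_sq_div (w φ : V) :
    ‖w - (⟪w, φ⟫ / ‖φ‖ ^ 2) • φ‖ ^ 2 = ‖w‖ ^ 2 - ⟪w, φ⟫ ^ 2 / ‖φ‖ ^ 2 := by
  rw [norm_sub_sq_real, inner_smul_right, norm_smul, Real.norm_eq_abs, mul_pow, sq_abs]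
  rcases eq_or_ne ‖φ‖ 0 with h | h
  · simp [h]
  · field_simp
    ring

theorem inner_sub_eq_norm_sq_of_inner_eq_sub {K : Submodule ℝ V} {f : V → ℝ} {u u₀ φ : V}
    (hu : ∀ v, ⟪u, v⟫ = f v) (hφ : φ ∈ K) (hφK : ∀ v ∈ K, ⟪φ, v⟫ = f v - ⟪u₀, v⟫) :
    ⟪u - u₀, φ⟫ = ‖φ‖ ^ 2 := by
  rw [inner_sub_left, hu, ← hφK φ hφ, real_inner_self_eq_norm_sq]

end

theorem stmt_5_general {V : Type*} [NormedAddCommGroup V] [InnerProductSpace ℝ V]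
    (Vi : Submodule ℝ V)
    (f : V →L[ℝ] ℝ) (u u_ms φ : V)
    (hu : ∀ v, ⟪u, v⟫ = f v)
    (hφ : φ ∈ Vi) (hφeq : ∀ v ∈ Vi, ⟪φ, v⟫ = f v - ⟪u_ms, v⟫)
    (α : ℝ) (hα : α = ⟪u - u_ms, φ⟫ / ‖φ‖ ^ 2) :
    ‖u - (u_ms + α • φ)‖ ^ 2 = ‖u - u_ms‖ ^ 2 - ⟪u - u_ms, φ⟫ ^ 2 / ‖φ‖ ^ 2 ∧
    ⟪u - u_ms, φ⟫ = ‖φ‖ ^ 2 ∧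
    ‖u - (u_ms + α • φ)‖ ^ 2 = ‖u - u_ms‖ ^ 2 - ‖φ‖ ^ 2 := by
  have hinner : ⟪u - u_ms, φ⟫ = ‖φ‖ ^ 2 := inner_sub_eq_norm_sq_of_inner_eq_sub hu hφ hφeq
  have herror : ‖u - (u_ms + α • φ)‖ ^ 2 = ‖u - u_ms‖ ^ 2 - ⟪u - u_ms, φ⟫ ^ 2 / ‖φ‖ ^ 2 := by
    rw [← sub_sub, hα, norm_sub_smul_sq_eq_sub_inner_sq_div]
  refine ⟨herror, hinner, ?_⟩
  rw [herror, hinner, sq (‖φ‖ ^ 2), mul_self_div_self]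

theorem stmt_5 {V : Type*} [NormedAddCommGroup V] [InnerProductSpace ℝ V] [CompleteSpace V]
    (Vi : Submodule ℝ V) (hViclosed : IsClosed (Vi : Set V))
    (f : V →L[ℝ] ℝ) (u u_ms φ : V)
    (hu : ∀ v, ⟪u, v⟫ = f v)
    (hφ : φ ∈ Vi) (hφeq : ∀ v ∈ Vi, ⟪φ, v⟫ = f v - ⟪u_ms, v⟫)
    (hφne : φ ≠ 0)
    (α : ℝ) (hα : α = ⟪u - u_ms, φ⟫ / ‖φ‖ ^ 2) :
    ‖u - (u_ms + α • φ)‖ ^ 2 = ‖u - u_ms‖ ^ 2 - ⟪u - u_ms, φ⟫ ^ 2 / ‖φ‖ ^ 2 ∧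
    ⟪u - u_ms, φ⟫ = ‖φ‖ ^ 2 ∧
    ‖u - (u_ms + α • φ)‖ ^ 2 = ‖u - u_ms‖ ^ 2 - ‖φ‖ ^ 2 :=
  stmt_5_general Vi f u u_ms φ hu hφ hφeq α hα
end

section
/- Let V be a real Hilbert space with inner product a, f and g bounded linear functionals, u and z the exact primal and dual solutions (a(u,·)=f, a(z,·)=g). Let W be a closed subspace with Galerkin primal/dual solutions u_ms, z_ms. Let V_i, V_j be closed subspaces of V, φ ∈ V_i the a-Riesz representative in V_i of v ↦ f(v) − a(u_ms,v), and ψ ∈ V_j the a-Riesz representative in V_j of v ↦ g(v) − a(z_ms,v). Let W' = W + span{φ, ψ} and let u_ms', z_ms' be the Galerkin primal/dual solutions in W'. Then |g(u − u_ms')| ≤ (‖u − u_ms‖_V² − ‖φ‖_V²)^{1/2} · (‖z − z_ms‖_V² − ‖ψ‖_V²)^{1/2}. -/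
open RealInnerProductSpace

theorem stmt_7 {V : Type*} [NormedAddCommGroup V] [InnerProductSpace ℝ V] [CompleteSpace V]
    (W : Submodule ℝ V) (hWclosed : IsClosed (W : Set V))
    (Vi Vj : Submodule ℝ V) (hViclosed : IsClosed (Vi : Set V)) (hVjclosed : IsClosed (Vj : Set V))
    (f g : V →L[ℝ] ℝ) (u z u_ms z_ms φ ψ : V)
    (hu : ∀ v, ⟪u, v⟫ = f v) (hz : ∀ v, ⟪z, v⟫ = g v)
    (hu_ms : u_ms ∈ W) (hz_ms : z_ms ∈ W)
    (hums : ∀ w ∈ W, ⟪u_ms, w⟫ = f w) (hzms : ∀ w ∈ W, ⟪z_ms, w⟫ = g w)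
    (hφ : φ ∈ Vi) (hφeq : ∀ v ∈ Vi, ⟪φ, v⟫ = f v - ⟪u_ms, v⟫)
    (hψ : ψ ∈ Vj) (hψeq : ∀ v ∈ Vj, ⟪ψ, v⟫ = g v - ⟪z_ms, v⟫)
    (W' : Submodule ℝ V) (hW' : W' = W ⊔ Submodule.span ℝ {φ, ψ})
    (u_ms' z_ms' : V) (hu_ms' : u_ms' ∈ W') (hz_ms' : z_ms' ∈ W')
    (hums' : ∀ w ∈ W', ⟪u_ms', w⟫ = f w) (hzms' : ∀ w ∈ W', ⟪z_ms', w⟫ = g w) :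
    |g (u - u_ms')| ≤
      Real.sqrt (‖u - u_ms‖ ^ 2 - ‖φ‖ ^ 2) * Real.sqrt (‖z - z_ms‖ ^ 2 - ‖ψ‖ ^ 2) := by
  have hφW' : φ ∈ W' := by
    rw [hW']; exact Submodule.mem_sup_right (Submodule.subset_span (by simp))
  have hψW' : ψ ∈ W' := by
    rw [hW']; exact Submodule.mem_sup_right (Submodule.subset_span (by simp))
  have hWle : W ≤ W' := by rw [hW']; exact le_sup_left
  have hup : ∀ w ∈ W', ⟪u - u_ms', w⟫ = 0 := fun w hw => by
    rw [inner_sub_left, hu w, hums' w hw]; ring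
  have hzp : ∀ w ∈ W', ⟪z - z_ms', w⟫ = 0 := fun w hw => by
    rw [inner_sub_left, hz w, hzms' w hw]; ring
  have key : g (u - u_ms') = ⟪z - z_ms', u - u_ms'⟫ := by
    have h0 : ⟪z_ms', u - u_ms'⟫ = (0:ℝ) := by
      rw [real_inner_comm]; exact hup z_ms' hz_ms'
    rw [inner_sub_left, ← hz (u - u_ms'), h0]
    ring
  -- primal bound
  have hprim : ‖u - u_ms'‖ ^ 2 ≤ ‖u - u_ms‖ ^ 2 - ‖φ‖ ^ 2 := by
    have hmem : u_ms + φ ∈ W' := add_mem (hWle hu_ms) hφW'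
    have hdiff : u_ms' - (u_ms + φ) ∈ W' := sub_mem hu_ms' hmem
    have heq : u - (u_ms + φ) = (u - u_ms') + (u_ms' - (u_ms + φ)) := by abel
    have pyth : ‖u - (u_ms + φ)‖ ^ 2
        = ‖u - u_ms'‖ ^ 2 + ‖u_ms' - (u_ms + φ)‖ ^ 2 := by
      rw [heq, norm_add_sq_real, hup _ hdiff]; ring
    have h1 : ⟪u - u_ms, φ⟫ = ‖φ‖ ^ 2 := by
      have h2 := hφeq φ hφ
      rw [real_inner_self_eq_norm_sq] at h2
      rw [inner_sub_left, hu φ]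
      linarith
    have heq2 : u - (u_ms + φ) = (u - u_ms) - φ := by abel
    have hval : ‖u - (u_ms + φ)‖ ^ 2 = ‖u - u_ms‖ ^ 2 - ‖φ‖ ^ 2 := by
      rw [heq2, norm_sub_sq_real, h1]; ring
    nlinarith [sq_nonneg ‖u_ms' - (u_ms + φ)‖]
  have hdual : ‖z - z_ms'‖ ^ 2 ≤ ‖z - z_ms‖ ^ 2 - ‖ψ‖ ^ 2 := by
    have hmem : z_ms + ψ ∈ W' := add_mem (hWle hz_ms) hψW'
    have hdiff : z_ms' - (z_ms + ψ) ∈ W' := sub_mem hz_ms' hmem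
    have heq : z - (z_ms + ψ) = (z - z_ms') + (z_ms' - (z_ms + ψ)) := by abel
    have pyth : ‖z - (z_ms + ψ)‖ ^ 2
        = ‖z - z_ms'‖ ^ 2 + ‖z_ms' - (z_ms + ψ)‖ ^ 2 := by
      rw [heq, norm_add_sq_real, hzp _ hdiff]; ring
    have h1 : ⟪z - z_ms, ψ⟫ = ‖ψ‖ ^ 2 := by
      have h2 := hψeq ψ hψ
      rw [real_inner_self_eq_norm_sq] at h2
      rw [inner_sub_left, hz ψ]
      linarith
    have heq2 : z - (z_ms + ψ) = (z - z_ms) - ψ := by abel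
    have hval : ‖z - (z_ms + ψ)‖ ^ 2 = ‖z - z_ms‖ ^ 2 - ‖ψ‖ ^ 2 := by
      rw [heq2, norm_sub_sq_real, h1]; ring
    nlinarith [sq_nonneg ‖z_ms' - (z_ms + ψ)‖]
  have hu1 : ‖u - u_ms'‖ ≤ Real.sqrt (‖u - u_ms‖ ^ 2 - ‖φ‖ ^ 2) := by
    rw [← Real.sqrt_sq (norm_nonneg (u - u_ms'))]
    exact Real.sqrt_le_sqrt hprim
  have hz1 : ‖z - z_ms'‖ ≤ Real.sqrt (‖z - z_ms‖ ^ 2 - ‖ψ‖ ^ 2) := by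
    rw [← Real.sqrt_sq (norm_nonneg (z - z_ms'))]
    exact Real.sqrt_le_sqrt hdual
  calc |g (u - u_ms')| = |⟪z - z_ms', u - u_ms'⟫| := by rw [key]
    _ ≤ ‖z - z_ms'‖ * ‖u - u_ms'‖ := abs_real_inner_le_norm _ _
    _ ≤ Real.sqrt (‖u - u_ms‖ ^ 2 - ‖φ‖ ^ 2) * Real.sqrt (‖z - z_ms‖ ^ 2 - ‖ψ‖ ^ 2) := by
        rw [mul_comm]
        exact mul_le_mul hu1 hz1 (norm_nonneg _) (Real.sqrt_nonneg _)
end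

section
/- Let H be a real Hilbert space with inner product a, u ∈ H, W a closed subspace, u_W the a-orthogonal projection of u onto W, V_i a closed subspace of H, and φ the a-orthogonal projection of u − u_W onto V_i. If W' = W + span{φ} and u_{W'} is the a-orthogonal projection of u onto W', then ‖u − u_{W'}‖² ≤ ‖u − u_W‖² − ‖φ‖². -/
/-!
Since `φ` is the orthogonal projection of `u - u_W` onto `Vi`, Pythagoras gives
`‖u - (u_W + φ)‖² = ‖u - u_W‖² - ‖φ‖²`; and `u_W + φ ∈ W'`, so the best approximation
`u_W'` of `u` in `W'` does at least as well.
-/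

open RealInnerProductSpace

section

variable {E : Type*} [NormedAddCommGroup E] [InnerProductSpace ℝ E]

theorem norm_sub_sq_le_of_forall_inner_eq_zero {K : Submodule ℝ E} {x p w : E}
    (hp : p ∈ K) (hw : w ∈ K) (horth : ∀ v ∈ K, ⟪x - p, v⟫ = 0) :
    ‖x - p‖ ^ 2 ≤ ‖x - w‖ ^ 2 := by
  have h := norm_add_sq_eq_norm_sq_add_norm_sq_real (horth _ (K.sub_mem hp hw))
  rw [sub_add_sub_cancel] at h
  rw [sq, sq, h]
  exact le_add_of_nonneg_right (mul_self_nonneg _)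

theorem norm_sub_sq_eq_of_inner_sub_eq_zero {y φ : E} (h : ⟪y - φ, φ⟫ = 0) :
    ‖y - φ‖ ^ 2 = ‖y‖ ^ 2 - ‖φ‖ ^ 2 := by
  have hpyth := norm_add_sq_eq_norm_sq_add_norm_sq_real h
  rw [sub_add_cancel] at hpyth
  rw [sq, sq, sq, hpyth]
  ring

end

theorem stmt_13_general {H : Type*} [NormedAddCommGroup H] [InnerProductSpace ℝ H]
    (W : Submodule ℝ H)
    (Vi : Submodule ℝ H)
    (u u_W φ : H)
    (hu_W : u_W ∈ W)
    (hφ : φ ∈ Vi) (hφproj : ∀ v ∈ Vi, ⟪(u - u_W) - φ, v⟫ = 0)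
    (W' : Submodule ℝ H) (hW' : W' = W ⊔ Submodule.span ℝ {φ})
    (u_W' : H) (hu_W' : u_W' ∈ W') (hproj' : ∀ w ∈ W', ⟪u - u_W', w⟫ = 0) :
    ‖u - u_W'‖ ^ 2 ≤ ‖u - u_W‖ ^ 2 - ‖φ‖ ^ 2 := by
  have hcompetitor : u_W + φ ∈ W' :=
    hW' ▸ Submodule.add_mem_sup hu_W (Submodule.mem_span_singleton_self φ)
  calc ‖u - u_W'‖ ^ 2 ≤ ‖u - (u_W + φ)‖ ^ 2 :=
        norm_sub_sq_le_of_forall_inner_eq_zero hu_W' hcompetitor hproj'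
    _ = ‖(u - u_W) - φ‖ ^ 2 := by rw [sub_add_eq_sub_sub]
    _ = ‖u - u_W‖ ^ 2 - ‖φ‖ ^ 2 := norm_sub_sq_eq_of_inner_sub_eq_zero (hφproj φ hφ)

theorem stmt_13 {H : Type*} [NormedAddCommGroup H] [InnerProductSpace ℝ H] [CompleteSpace H]
    (W : Submodule ℝ H) (hWclosed : IsClosed (W : Set H))
    (Vi : Submodule ℝ H) (hViclosed : IsClosed (Vi : Set H))
    (u u_W φ : H)
    (hu_W : u_W ∈ W) (hproj : ∀ w ∈ W, ⟪u - u_W, w⟫ = 0)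
    (hφ : φ ∈ Vi) (hφproj : ∀ v ∈ Vi, ⟪(u - u_W) - φ, v⟫ = 0)
    (W' : Submodule ℝ H) (hW' : W' = W ⊔ Submodule.span ℝ {φ})
    (u_W' : H) (hu_W' : u_W' ∈ W') (hproj' : ∀ w ∈ W', ⟪u - u_W', w⟫ = 0) :
    ‖u - u_W'‖ ^ 2 ≤ ‖u - u_W‖ ^ 2 - ‖φ‖ ^ 2 :=
  stmt_13_general W Vi u u_W φ hu_W hφ hφproj W' hW' u_W' hu_W' hproj'
end

section
/- Let V be a real Hilbert space with inner product a and energy norm ‖·‖, let u solve a(u,v) = f(v) for all v ∈ V, let W be a closed subspace with Galerkin solution u_ms, and let V_1, ..., V_N be pairwise a-orthogonal closed subspaces of V (i.e., a(v_i, v_j) = 0 for v_i ∈ V_i, v_j ∈ V_j, i ≠ j). For I ⊆ {1,...,N} let φ_i ∈ V_i be the a-Riesz representative in V_i of the residual v ↦ f(v) − a(u_ms, v), and let W' = W + span{φ_i : i ∈ I} with Galerkin solution u_ms'. Then ‖u − u_ms'‖² ≤ ‖u − u_ms‖² − Σ_{i∈I} ‖φ_i‖². -/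
open RealInnerProductSpace

theorem stmt_15 {V : Type*} [NormedAddCommGroup V] [InnerProductSpace ℝ V] [CompleteSpace V]
    (W : Submodule ℝ V) (hWclosed : IsClosed (W : Set V))
    (N : ℕ) (Vi : Fin N → Submodule ℝ V) (hVi : ∀ i, IsClosed ((Vi i : Submodule ℝ V) : Set V))
    (horth : ∀ i j, i ≠ j → ∀ vi ∈ Vi i, ∀ vj ∈ Vi j, ⟪vi, vj⟫ = 0)
    (f : V →L[ℝ] ℝ) (u u_ms : V)
    (hu : ∀ v, ⟪u, v⟫ = f v)
    (hu_ms : u_ms ∈ W) (hums : ∀ w ∈ W, ⟪u_ms, w⟫ = f w)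
    (I : Finset (Fin N)) (φ : Fin N → V)
    (hφ : ∀ i ∈ I, φ i ∈ Vi i)
    (hφeq : ∀ i ∈ I, ∀ v ∈ Vi i, ⟪φ i, v⟫ = f v - ⟪u_ms, v⟫)
    (W' : Submodule ℝ V) (hW' : W' = W ⊔ Submodule.span ℝ (φ '' I))
    (u_ms' : V) (hu_ms' : u_ms' ∈ W') (hums' : ∀ w ∈ W', ⟪u_ms', w⟫ = f w) :
    ‖u - u_ms'‖ ^ 2 ≤ ‖u - u_ms‖ ^ 2 - ∑ i ∈ I, ‖φ i‖ ^ 2 := by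
  set p := ∑ i ∈ I, φ i with hp
  have hpW' : p ∈ W' := by
    rw [hW']
    exact Submodule.sum_mem _ fun i hi =>
      Submodule.mem_sup_right (Submodule.subset_span ⟨i, hi, rfl⟩)
  have hsW' : u_ms + p ∈ W' :=
    Submodule.add_mem _ (by rw [hW']; exact Submodule.mem_sup_left hu_ms) hpW'
  have horthW' : ∀ w ∈ W', ⟪u - u_ms', w⟫ = 0 := fun w hw => by
    rw [inner_sub_left, hu w, hums' w hw]; ring
  have hcea : ‖u - u_ms'‖ ^ 2 ≤ ‖u - (u_ms + p)‖ ^ 2 := by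
    have hdec : u - (u_ms + p) = (u - u_ms') + (u_ms' - (u_ms + p)) := by abel
    have hz := horthW' _ (Submodule.sub_mem _ hu_ms' hsW')
    rw [hdec, norm_add_sq_real, hz]
    nlinarith [sq_nonneg ‖u_ms' - (u_ms + p)‖]
  have hEφ : ∀ i ∈ I, ⟪u - u_ms, φ i⟫ = ‖φ i‖ ^ 2 := fun i hi => by
    have h := hφeq i hi (φ i) (hφ i hi)
    rw [real_inner_self_eq_norm_sq] at h
    rw [inner_sub_left, hu (φ i)]
    linarith
  have hEp : ⟪u - u_ms, p⟫ = ∑ i ∈ I, ‖φ i‖ ^ 2 := by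
    rw [hp, inner_sum]
    exact Finset.sum_congr rfl hEφ
  have hpp : ‖p‖ ^ 2 = ∑ i ∈ I, ‖φ i‖ ^ 2 := by
    rw [← real_inner_self_eq_norm_sq, hp, sum_inner]
    refine Finset.sum_congr rfl fun i hi => ?_
    rw [inner_sum, Finset.sum_eq_single i
      (fun j hj hne => horth i j hne.symm (φ i) (hφ i hi) (φ j) (hφ j hj))
      (fun h => absurd hi h)]
    exact real_inner_self_eq_norm_sq (φ i)
  have hkey : ‖u - (u_ms + p)‖ ^ 2 = ‖u - u_ms‖ ^ 2 - ∑ i ∈ I, ‖φ i‖ ^ 2 := by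
    have h1 : u - (u_ms + p) = (u - u_ms) - p := by abel
    rw [h1, norm_sub_sq_real, hEp, hpp]
    ring
  linarith
end
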